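/- arXiv:1907.13265 — 3 statements merged into one kernel-verified Lean document; each statement's English description precedes it below -/
import Mathlib

section
/- For all subsets S, S' ⊆ P of patients, the optimal cancellation cost satisfies Q(S') ≥ Q(S) − Σ_{p ∈ S \ S'} c p. (This is the validity of the logic-based Benders optimality cut Q ≥ Q(S) − Σ_{p∈S} c p·(1 − x_p), where x is the 0/1 indicator vector of the patient set S': the cut is tight at S' = S and does not exclude any other assignment.) -/
open Finset

/-- The optimal cancellation cost of a set `S` of patients assigned to an operating
room with time limit `B`: the minimum, over sets `Z ⊆ S` of performed surgeries whose
total duration fits within the limit, of the total cancellation cost of `S \ Z`. -/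
noncomputable def Qcost {α : Type*} [DecidableEq α] (c T : α → ℝ) {B : ℝ} (hB : 0 ≤ B)
    (S : Finset α) : ℝ :=
  (S.powerset.filter (fun Z => ∑ p ∈ Z, T p ≤ B)).inf'
    ⟨∅, by simp [hB]⟩ (fun Z => ∑ p ∈ S \ Z, c p)

/-- Validity of the LBBD optimality cut: for all `S, S' ⊆ P`,
`Q(S') ≥ Q(S) − Σ_{p ∈ S \ S'} c p`. -/
theorem lbbd_optimality_cut_valid {α : Type*} [DecidableEq α]
    (P : Finset α) (c T : α → ℝ) (B : ℝ)
    (hc : ∀ p ∈ P, 0 ≤ c p) (hT : ∀ p ∈ P, 0 ≤ T p) (hB : 0 ≤ B)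
    (S S' : Finset α) (hS : S ⊆ P) (hS' : S' ⊆ P) :
    Qcost c T hB S' ≥ Qcost c T hB S - ∑ p ∈ S \ S', c p := by
  obtain ⟨Z', hZ'mem, hZ'eq⟩ :=
    Finset.exists_mem_eq_inf' (⟨∅, by simp [hB]⟩ :
      (S'.powerset.filter (fun Z => ∑ p ∈ Z, T p ≤ B)).Nonempty)
      (fun Z => ∑ p ∈ S' \ Z, c p)
  simp only [Finset.mem_filter, Finset.mem_powerset] at hZ'mem
  obtain ⟨hZ'sub, hZ'T⟩ := hZ'mem
  -- Candidate for S: Z = Z' ∩ S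
  have hfeas : Z' ∩ S ∈ S.powerset.filter (fun Z => ∑ p ∈ Z, T p ≤ B) := by
    simp only [Finset.mem_filter, Finset.mem_powerset]
    refine ⟨Finset.inter_subset_right, le_trans ?_ hZ'T⟩
    exact Finset.sum_le_sum_of_subset_of_nonneg Finset.inter_subset_left
      (fun p hp _ => hT p (hS' (hZ'sub hp)))
  have hQS : Qcost c T hB S ≤ ∑ p ∈ S \ (Z' ∩ S), c p :=
    Finset.inf'_le _ hfeas
  have hsplit : ∑ p ∈ S \ (Z' ∩ S), c p ≤ (∑ p ∈ S' \ Z', c p) + ∑ p ∈ S \ S', c p := by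
    rw [← Finset.sum_union]
    · refine Finset.sum_le_sum_of_subset_of_nonneg ?_ ?_
      · intro p hp
        simp only [Finset.mem_sdiff, Finset.mem_inter, Finset.mem_union, not_and] at hp ⊢
        rcases hp with ⟨hpS, hpnZ⟩
        by_cases hpS' : p ∈ S'
        · exact Or.inl ⟨hpS', fun h => hpnZ h hpS⟩
        · exact Or.inr ⟨hpS, hpS'⟩
      · intro p hp _
        rcases Finset.mem_union.mp hp with h | h
        · exact hc p (hS' (Finset.mem_sdiff.mp h).1)
        · exact hc p (hS (Finset.mem_sdiff.mp h).1)
    · rw [Finset.disjoint_left]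
      intro p h1 h2
      exact (Finset.mem_sdiff.mp h2).2 (Finset.mem_sdiff.mp h1).1
  have hQ' : Qcost c T hB S' = ∑ p ∈ S' \ Z', c p := hZ'eq
  linarith
end

section
/- For every subset S ⊆ P of patients assigned to an operating room, the optimal cancellation cost satisfies Q(S) ≥ (min_{p ∈ P} c p / T p) · (Σ_{p ∈ S} T p − B). (This is the validity of the subproblem-relaxation lower-bounding constraint added to the master problem: the cancellation cost is at least the cheapest cost-per-minute ratio times the total overtime of the assignment.) -/
open Finset

/-- Validity of the subproblem-relaxation lower bound: for every `S ⊆ P`,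
`Q(S) ≥ (min_{p ∈ P} c p / T p) · (Σ_{p ∈ S} T p − B)`. -/
theorem Qcost_relaxation_lower_bound {α : Type*} [DecidableEq α]
    (P : Finset α) (hP : P.Nonempty) (c T : α → ℝ) (B : ℝ)
    (hc : ∀ p ∈ P, 0 ≤ c p) (hT : ∀ p ∈ P, 0 < T p) (hB : 0 ≤ B)
    (S : Finset α) (hS : S ⊆ P) :
    Qcost c T hB S ≥ (P.inf' hP (fun p => c p / T p)) * ((∑ p ∈ S, T p) - B) := by
  set r := P.inf' hP (fun p => c p / T p) with hr
  have hr0 : 0 ≤ r := by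
    rw [hr]
    apply Finset.le_inf'
    intro p hp
    exact div_nonneg (hc p hp) (hT p hp).le
  rw [ge_iff_le, Qcost]
  apply Finset.le_inf'
  intro Z hZ
  simp only [Finset.mem_filter, Finset.mem_powerset] at hZ
  obtain ⟨hZS, hZB⟩ := hZ
  have h1 : ∀ p ∈ S \ Z, r * T p ≤ c p := by
    intro p hp
    have hpP := hS (Finset.mem_sdiff.mp hp).1
    have hle := Finset.inf'_le (fun p => c p / T p) hpP
    calc r * T p ≤ (c p / T p) * T p :=
          mul_le_mul_of_nonneg_right hle (hT p hpP).le
      _ = c p := div_mul_cancel₀ _ (hT p hpP).ne'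
  calc r * ((∑ p ∈ S, T p) - B)
      ≤ r * (∑ p ∈ S \ Z, T p) := by
        apply mul_le_mul_of_nonneg_left _ hr0
        rw [Finset.sum_sdiff_eq_sub hZS]
        linarith
    _ = ∑ p ∈ S \ Z, r * T p := Finset.mul_sum _ _ _
    _ ≤ ∑ p ∈ S \ Z, c p := Finset.sum_le_sum h1
end

section
/- Let S ⊆ P be a set of patients, y ≥ 1 a number of opened ORs, a : S → Fin y an assignment of patients to ORs, and for each OR r ∈ Fin y let C_r ⊆ a⁻¹(r) be a set of cancelled patients such that the remaining surgeries fit within the time limit, i.e. Σ_{p ∈ a⁻¹(r) \ C_r} T p ≤ B. Then the total cancellation cost satisfies Σ_{r ∈ Fin y} Σ_{p ∈ C_r} c p ≥ (min_{p ∈ P} c p / T p) · (Σ_{p ∈ S} T p − B · y). -/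
open Finset

/-- Let `S ⊆ P` be a set of patients, `y ≥ 1` a number of opened ORs, `a` an
assignment of patients to ORs, and for each OR `r` let `C r` be a set of cancelled
patients among those assigned to `r` such that the remaining surgeries fit within the
time limit. Then the total cancellation cost is at least the cheapest
cost-per-minute ratio times the total overtime
`Σ_{p ∈ S} T p − B·y` of the assignment. -/
theorem total_cancellation_cost_lower_bound {α : Type*} [DecidableEq α]
    (P : Finset α) (hP : P.Nonempty) (c T : α → ℝ) (B : ℝ)
    (hc : ∀ p ∈ P, 0 ≤ c p) (hT : ∀ p ∈ P, 0 < T p) (hB : 0 ≤ B)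
    (S : Finset α) (hS : S ⊆ P) (y : ℕ) (hy : 1 ≤ y)
    (a : α → Fin y) (C : Fin y → Finset α)
    (hC : ∀ r : Fin y, C r ⊆ S.filter (fun p => a p = r))
    (hfit : ∀ r : Fin y, ∑ p ∈ S.filter (fun p => a p = r) \ C r, T p ≤ B) :
    ∑ r : Fin y, ∑ p ∈ C r, c p ≥
      (P.inf' hP (fun p => c p / T p)) * ((∑ p ∈ S, T p) - B * y) := by
  set m := P.inf' hP (fun p => c p / T p) with hm
  have hm0 : 0 ≤ m := by
    obtain ⟨q, hq, hqe⟩ := Finset.exists_mem_eq_inf' hP (fun p => c p / T p)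
    rw [hm, hqe]
    exact div_nonneg (hc q hq) (hT q hq).le
  -- c p ≥ m * T p for p ∈ P
  have key : ∀ p ∈ P, m * T p ≤ c p := by
    intro p hp
    have h1 : m ≤ c p / T p := Finset.inf'_le _ hp
    have := mul_le_mul_of_nonneg_right h1 (hT p hp).le
    rwa [div_mul_cancel₀ _ (hT p hp).ne'] at this
  -- per-OR: Σ_{C r} T ≥ Σ_{fiber r} T − B
  have hfiber : ∀ r : Fin y, (∑ p ∈ S.filter (fun p => a p = r), T p) - B ≤
      ∑ p ∈ C r, T p := by
    intro r
    have hsplit : ∑ p ∈ S.filter (fun p => a p = r), T p =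
        (∑ p ∈ S.filter (fun p => a p = r) \ C r, T p) + ∑ p ∈ C r, T p :=
      (Finset.sum_sdiff (hC r)).symm
    have := hfit r
    linarith
  -- Σ_r Σ_{fiber r} T = Σ_S T
  have hsum : ∑ r : Fin y, ∑ p ∈ S.filter (fun p => a p = r), T p = ∑ p ∈ S, T p := by
    rw [← Finset.sum_fiberwise S a T]
  have hTC : (∑ p ∈ S, T p) - B * y ≤ ∑ r : Fin y, ∑ p ∈ C r, T p := by
    calc (∑ p ∈ S, T p) - B * y
        = ∑ r : Fin y, ((∑ p ∈ S.filter (fun p => a p = r), T p) - B) := by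
          rw [Finset.sum_sub_distrib, hsum, Finset.sum_const, Finset.card_univ,
            Fintype.card_fin, nsmul_eq_mul, mul_comm]
      _ ≤ ∑ r : Fin y, ∑ p ∈ C r, T p := Finset.sum_le_sum fun r _ => hfiber r
  calc m * ((∑ p ∈ S, T p) - B * y)
      ≤ m * ∑ r : Fin y, ∑ p ∈ C r, T p := mul_le_mul_of_nonneg_left hTC hm0
    _ = ∑ r : Fin y, ∑ p ∈ C r, m * T p := by
        rw [Finset.mul_sum]; exact Finset.sum_congr rfl fun r _ => Finset.mul_sum ..
    _ ≤ ∑ r : Fin y, ∑ p ∈ C r, c p := by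
        refine Finset.sum_le_sum fun r _ => Finset.sum_le_sum fun p hp => ?_
        exact key p (hS (Finset.mem_filter.mp (hC r hp)).1)
end
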